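/- arXiv:2202.07149 — 2 statements merged into one kernel-verified Lean document; each statement's English description precedes it below -/
import Mathlib

section
/- Let G be a C_3^{(3)}-saturated 3-uniform hypergraph on n vertices with |E(G)| ≤ 2n, and let ℓ ≥ 1 be a real number. Then the number of vertices u with 1 ≤ d(u) ≤ 8 for which there exists a vertex h with d(h) ≥ ℓ and d(hu) = d(u) is at most 54n/ℓ. -/
open Finset

variable {V : Type*}

/-- `E` is the edge set of a 3-uniform hypergraph: every edge has 3 vertices. -/
def IsUniform3 [DecidableEq V] (E : Finset (Finset V)) : Prop :=
  ∀ e ∈ E, e.card = 3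

/-- `E` contains a copy of the loose cycle `C₃⁽³⁾`: three edges whose pairwise
intersections are three distinct single vertices, with empty triple intersection. -/
def HasC3 [DecidableEq V] (E : Finset (Finset V)) : Prop :=
  ∃ e₁ ∈ E, ∃ e₂ ∈ E, ∃ e₃ ∈ E, ∃ a b c : V,
    e₁ ∩ e₂ = {a} ∧ e₂ ∩ e₃ = {b} ∧ e₁ ∩ e₃ = {c} ∧
    a ≠ b ∧ b ≠ c ∧ a ≠ c ∧ e₁ ∩ e₂ ∩ e₃ = ∅

/-- `E` is a `C₃⁽³⁾`-saturated 3-uniform hypergraph: it is 3-uniform, `C₃⁽³⁾`-free,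
and adding any non-edge triple creates a copy of `C₃⁽³⁾`. -/
def IsSat3 [DecidableEq V] (E : Finset (Finset V)) : Prop :=
  IsUniform3 E ∧ ¬ HasC3 E ∧
    ∀ e : Finset V, e.card = 3 → e ∉ E → HasC3 (insert e E)

/-- The degree of a vertex: the number of edges containing it. -/
def deg [DecidableEq V] (E : Finset (Finset V)) (v : V) : ℕ :=
  (E.filter fun e => v ∈ e).card

/-- The codegree of a pair of vertices: number of edges containing both. -/
def codeg [DecidableEq V] (E : Finset (Finset V)) (u v : V) : ℕ :=
  (E.filter fun e => u ∈ e ∧ v ∈ e).card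

/-- `u` and `v` are distinct and share an edge (`v ∈ N(u)`). -/
def Adj [DecidableEq V] (E : Finset (Finset V)) (u v : V) : Prop :=
  u ≠ v ∧ ∃ e ∈ E, u ∈ e ∧ v ∈ e

/-- `e₁, e₂` form a `u,v`-link: a loose path of two edges from `u` to `v`. -/
def IsLink [DecidableEq V] (E : Finset (Finset V)) (u v : V) (e₁ e₂ : Finset V) : Prop :=
  e₁ ∈ E ∧ e₂ ∈ E ∧ u ∈ e₁ ∧ v ∈ e₂ ∧ u ∉ e₂ ∧ v ∉ e₁ ∧
    ∃ w, w ∉ ({u, v} : Finset V) ∧ e₁ ∩ e₂ = {w}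

/-- `uv` is a good pair: there exists a `u,v`-link. -/
def GoodPair [DecidableEq V] (E : Finset (Finset V)) (u v : V) : Prop :=
  ∃ e₁ e₂, IsLink E u v e₁ e₂

/-!
Call `v ≠ h` *pinned* to `h` if every edge at `v` contains `h`, i.e. `d(hv) = d(v)`. If `u` and
`v` are pinned to `h`, then `{u, v, h}` is an edge: otherwise adding it creates a `C₃⁽³⁾`, whose
two old edges meet the triple in distinct single vertices, yet an old edge meeting the triple in
a single vertex meets it in `h`. So for `u` pinned to `h`, `v ↦ {u, v, h}` injects the other
vertices pinned to `h` into the edges at `u`, and at most `9` vertices of degree at most `8` are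
pinned to any `h`. By double counting, at most `3|E|/ℓ ≤ 6n/ℓ` vertices have degree at least `ℓ`.
-/

section

variable [DecidableEq V]

lemma exists_edges_meeting_of_hasC3_insert {E : Finset (Finset V)} {t : Finset V}
    (hC : HasC3 (insert t E)) (hE : ¬ HasC3 E) :
    ∃ f ∈ E, ∃ g ∈ E, ∃ a c : V, a ≠ c ∧ t ∩ f = {a} ∧ t ∩ g = {c} := by
  obtain ⟨e₁, he₁, e₂, he₂, e₃, he₃, a, b, c, h12, h23, h13, hab, hbc, hac, h123⟩ := hC
  rw [mem_insert] at he₁ he₂ he₃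
  rcases he₁ with rfl | h1 <;> rcases he₂ with rfl | h2 <;> rcases he₃ with rfl | h3
  · exact absurd (singleton_inj.1 (h12.symm.trans h23)) hab
  · exact absurd (singleton_inj.1 (h23.symm.trans h13)) hbc
  · exact absurd (singleton_inj.1 (h12.symm.trans ((inter_comm _ _).trans h23))) hab
  · exact ⟨e₂, h2, e₃, h3, a, c, hac, h12, h13⟩
  · exact absurd (singleton_inj.1 (h12.symm.trans h13)) hac
  · exact ⟨e₁, h1, e₃, h3, a, b, hab, (inter_comm _ _).trans h12, h23⟩
  · exact ⟨e₂, h2, e₁, h1, b, c, hbc, (inter_comm _ _).trans h23, (inter_comm _ _).trans h13⟩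
  · exact (hE ⟨e₁, h1, e₂, h2, e₃, h3, a, b, c, h12, h23, h13, hab, hbc, hac, h123⟩).elim

lemma forall_mem_of_codeg_eq_deg {E : Finset (Finset V)} {h u : V}
    (hc : codeg E h u = deg E u) : ∀ e ∈ E, u ∈ e → h ∈ e := by
  have heq : {e ∈ E | h ∈ e ∧ u ∈ e} = {e ∈ E | u ∈ e} :=
    eq_of_subset_of_card_le (monotone_filter_right E fun _ _ => And.right) hc.ge
  intro e he hue
  have hmem : e ∈ {e ∈ E | h ∈ e ∧ u ∈ e} := heq ▸ mem_filter.2 ⟨he, hue⟩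
  exact (mem_filter.1 hmem).2.1

lemma IsSat3.triple_mem_of_pinned {E : Finset (Finset V)} (hsat : IsSat3 E) {h u v : V}
    (huv : u ≠ v) (huh : u ≠ h) (hvh : v ≠ h)
    (hu : ∀ e ∈ E, u ∈ e → h ∈ e) (hv : ∀ e ∈ E, v ∈ e → h ∈ e) :
    {u, v, h} ∈ E := by
  by_contra ht
  obtain ⟨f, hf, g, hg, a, c, hac, hfa, hgc⟩ := exists_edges_meeting_of_hasC3_insert
    (hsat.2.2 _ (card_eq_three.2 ⟨u, v, h, huv, huh, hvh, rfl⟩) ht) hsat.2.1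
  have meets_at_h : ∀ f ∈ E, ∀ x : V, {u, v, h} ∩ f = {x} → x = h := by
    intro f hf x hx
    have hxf : x ∈ {u, v, h} ∩ f := hx ▸ mem_singleton_self x
    have hhf : x ∈ f → h ∈ f → x = h := fun hx' hh =>
      (mem_singleton.1 (hx ▸ mem_inter.2 ⟨by simp, hh⟩)).symm
    rw [mem_inter, mem_insert, mem_insert, mem_singleton] at hxf
    obtain ⟨rfl | rfl | rfl, hxf⟩ := hxf
    · exact hhf hxf (hu f hf hxf)
    · exact hhf hxf (hv f hf hxf)
    · rfl
  exact hac ((meets_at_h f hf a hfa).trans (meets_at_h g hg c hgc).symm)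

variable [Fintype V]

def pinned (E : Finset (Finset V)) (h : V) : Finset V :=
  {v | v ≠ h ∧ ∀ e ∈ E, v ∈ e → h ∈ e}

lemma mem_pinned {E : Finset (Finset V)} {h v : V} :
    v ∈ pinned E h ↔ v ≠ h ∧ ∀ e ∈ E, v ∈ e → h ∈ e := by
  simp [pinned]

lemma IsSat3.card_pinned_le {E : Finset (Finset V)} (hsat : IsSat3 E) {h u : V}
    (hu : u ∈ pinned E h) : #(pinned E h) ≤ deg E u + 1 := by
  rw [← card_erase_add_one hu, add_le_add_iff_right]
  obtain ⟨huh, hu⟩ := mem_pinned.1 hu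
  refine card_le_card_of_injOn (fun v => {u, v, h}) (fun v hv => ?_) (fun v hv w hw hvw => ?_)
  · obtain ⟨hvu, hv⟩ := mem_erase.1 hv
    obtain ⟨hvh, hv⟩ := mem_pinned.1 hv
    exact mem_filter.2 ⟨hsat.triple_mem_of_pinned (Ne.symm hvu) huh hvh hu hv, by simp⟩
  · obtain ⟨hvu, hv⟩ := mem_erase.1 hv
    have hvh := (mem_pinned.1 hv).1
    have hv' : v ∈ ({u, w, h} : Finset V) := by
      rw [← show ({u, v, h} : Finset V) = {u, w, h} from hvw]
      simp
    simpa [hvu, hvh] using hv'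

lemma IsSat3.card_filter_codeg_eq_deg_le {E : Finset (Finset V)} (hsat : IsSat3 E) (h : V)
    (k : ℕ) : #{u | u ≠ h ∧ deg E u ≤ k ∧ codeg E h u = deg E u} ≤ k + 1 := by
  set U : Finset V := {u | u ≠ h ∧ deg E u ≤ k ∧ codeg E h u = deg E u}
  obtain hU | ⟨u, hu⟩ := U.eq_empty_or_nonempty
  · simp [hU]
  obtain ⟨huh, hk, hc⟩ := (mem_filter.1 hu).2
  have hsub : U ⊆ pinned E h := fun v hv =>
    have ⟨hvh, _, hc⟩ := (mem_filter.1 hv).2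
    mem_pinned.2 ⟨hvh, forall_mem_of_codeg_eq_deg hc⟩
  calc #U ≤ #(pinned E h) := card_le_card hsub
    _ ≤ deg E u + 1 := hsat.card_pinned_le (hsub hu)
    _ ≤ k + 1 := by omega

lemma sum_deg_eq_sum_card (E : Finset (Finset V)) : ∑ v, deg E v = ∑ e ∈ E, #e := by
  simp_rw [deg, card_eq_sum_ones, sum_filter]
  rw [sum_comm]
  simp

lemma IsUniform3.mul_card_filter_le_deg_le {E : Finset (Finset V)} (hE : IsUniform3 E) (ℓ : ℝ) :
    ℓ * #{h | ℓ ≤ (deg E h : ℝ)} ≤ 3 * #E := by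
  have hsum : ∑ v, deg E v = 3 * #E := by
    rw [sum_deg_eq_sum_card, sum_congr rfl hE, sum_const, smul_eq_mul, mul_comm]
  calc ℓ * #{h | ℓ ≤ (deg E h : ℝ)}
      ≤ ∑ h ∈ {h | ℓ ≤ (deg E h : ℝ)}, (deg E h : ℝ) := by
        rw [mul_comm, ← nsmul_eq_mul]
        exact card_nsmul_le_sum _ _ _ fun h hh => (mem_filter.1 hh).2
    _ ≤ ∑ h, (deg E h : ℝ) := sum_le_sum_of_subset_of_nonneg (subset_univ _) fun _ _ _ => by
        positivity
    _ = 3 * #E := by exact_mod_cast hsum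

end

theorem few_full_codeg_low_vertices_general {V : Type*} [Fintype V] [DecidableEq V]
    (n : ℕ)
    (E : Finset (Finset V)) (hsat : IsSat3 E) (hE : E.card ≤ 2 * n)
    (ℓ : ℝ) (hl : 1 ≤ ℓ) :
    (({u : V | 1 ≤ deg E u ∧ deg E u ≤ 8 ∧
        ∃ h : V, h ≠ u ∧ ℓ ≤ (deg E h : ℝ) ∧ codeg E h u = deg E u}).ncard : ℝ)
      ≤ 54 * n / ℓ := by
  set S : Set V := {u | 1 ≤ deg E u ∧ deg E u ≤ 8 ∧
    ∃ h : V, h ≠ u ∧ ℓ ≤ (deg E h : ℝ) ∧ codeg E h u = deg E u}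
  set H : Finset V := {h | ℓ ≤ (deg E h : ℝ)}
  set U : V → Finset V := fun h => {u | u ≠ h ∧ deg E u ≤ 8 ∧ codeg E h u = deg E u}
  have hcover : S ⊆ ↑(H.biUnion U) := by
    rintro u ⟨-, hu8, h, hhu, hℓ, hc⟩
    exact mem_coe.2 <| mem_biUnion.2
      ⟨h, mem_filter.2 ⟨mem_univ h, hℓ⟩, mem_filter.2 ⟨mem_univ u, hhu.symm, hu8, hc⟩⟩
  have hlow : S.ncard ≤ 9 * #H := calc
    S.ncard ≤ #(H.biUnion U) := (Set.ncard_le_ncard hcover).trans_eq (Set.ncard_coe_finset _)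
    _ ≤ ∑ h ∈ H, #(U h) := card_biUnion_le
    _ ≤ ∑ _h ∈ H, 9 := sum_le_sum fun h _ => hsat.card_filter_codeg_eq_deg_le h 8
    _ = 9 * #H := by rw [sum_const, smul_eq_mul, mul_comm]
  have hhigh : ℓ * #H ≤ 6 * n := by
    have hE' : (#E : ℝ) ≤ 2 * n := by exact_mod_cast hE
    linarith [hsat.1.mul_card_filter_le_deg_le ℓ]
  have hlow' : (S.ncard : ℝ) ≤ 9 * #H := by exact_mod_cast hlow
  rw [le_div_iff₀ (by linarith)]
  nlinarith

theorem few_full_codeg_low_vertices {V : Type*} [Fintype V] [DecidableEq V]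
    (n : ℕ) (hcard : Fintype.card V = n)
    (E : Finset (Finset V)) (hsat : IsSat3 E) (hE : E.card ≤ 2 * n)
    (ℓ : ℝ) (hl : 1 ≤ ℓ) :
    (({u : V | 1 ≤ deg E u ∧ deg E u ≤ 8 ∧
        ∃ h : V, h ≠ u ∧ ℓ ≤ (deg E h : ℝ) ∧ codeg E h u = deg E u}).ncard : ℝ)
      ≤ 54 * n / ℓ :=
  few_full_codeg_low_vertices_general n E hsat hE ℓ hl
end

section
/- Let G be a C_3^{(3)}-saturated 3-uniform hypergraph and let j ≥ 2 be an integer. Then every vertex v of G has at most 2j^2 j-far neighbors. -/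
open Finset

variable {V : Type*}

/-- `u` is a `j`-far neighbor of `v`: `d(u) ≤ j`, `u ∈ N(v)`, every edge containing
`u` either contains `v` or has its other two vertices outside `N(v)`, and every edge
containing `u` but not `v` has all its vertices of degree at most `j`. -/
def JFarNeighbor [DecidableEq V] (E : Finset (Finset V)) (j : ℕ) (v u : V) : Prop :=
  deg E u ≤ j ∧ Adj E v u ∧
    (∀ e ∈ E, u ∈ e → (v ∈ e ∨ ∀ w ∈ e, w ≠ u → ¬ Adj E v w)) ∧
    (∀ e ∈ E, u ∈ e → v ∉ e → ∀ w ∈ e, deg E w ≤ j)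


/-!
Fix one `j`-far neighbor `u₀` of `v`. Any other one, `u`, either spans an edge with `v` and `u₀`
(at most `d(u₀) ≤ j` such `u`), or by saturation `{v, u₀, u}` is the first edge of a loose triangle
`t f g`. Condition (1) for the far neighbors `u₀, u` forces `v ∉ f ∪ g`, so the triangle reads as a
loose path `u₀ ∈ f ∋ m ∈ g ∋ u` with `v ∉ f`, `u₀ ∉ g`. There are at most `2j` such `m`; each has
degree at most `j` by condition (2), one of its edges being `f`, and every other edge through `m`
avoids `v` and so carries at most one far neighbor by condition (1). Altogether there are at most
`1 + j + 2j(j - 1) ≤ 2j²` far neighbors.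
-/

section Hypergraph

variable [DecidableEq V] {E : Finset (Finset V)} {j : ℕ} {u v w m : V}

/-- Chosen so that `HasC3 E` unfolds to `∃ e₁ ∈ E, ∃ e₂ ∈ E, ∃ e₃ ∈ E, IsLooseTriangle e₁ e₂ e₃`. -/
def IsLooseTriangle (e₁ e₂ e₃ : Finset V) : Prop :=
  ∃ a b c : V, e₁ ∩ e₂ = {a} ∧ e₂ ∩ e₃ = {b} ∧ e₁ ∩ e₃ = {c} ∧
    a ≠ b ∧ b ≠ c ∧ a ≠ c ∧ e₁ ∩ e₂ ∩ e₃ = ∅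

lemma eq_of_mem_of_inter_eq_singleton {s t : Finset V} {a x : V} (h : s ∩ t = {a})
    (hs : x ∈ s) (ht : x ∈ t) : x = a :=
  mem_singleton.1 (h ▸ mem_inter.2 ⟨hs, ht⟩)

lemma mem_of_inter_eq_singleton {s t : Finset V} {a : V} (h : s ∩ t = {a}) : a ∈ s ∧ a ∈ t :=
  mem_inter.1 (h ▸ mem_singleton_self a)

namespace IsLooseTriangle

variable {e₁ e₂ e₃ : Finset V}

lemma rotate (h : IsLooseTriangle e₁ e₂ e₃) : IsLooseTriangle e₂ e₃ e₁ := by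
  obtain ⟨a, b, c, h₁₂, h₂₃, h₁₃, hab, hbc, hac, h₁₂₃⟩ := h
  refine ⟨b, c, a, h₂₃, by rwa [inter_comm], by rwa [inter_comm], hbc, hac.symm, hab.symm, ?_⟩
  rwa [inter_comm, ← inter_assoc]

lemma swap (h : IsLooseTriangle e₁ e₂ e₃) : IsLooseTriangle e₁ e₃ e₂ := by
  obtain ⟨a, b, c, h₁₂, h₂₃, h₁₃, hab, hbc, hac, h₁₂₃⟩ := h
  refine ⟨c, b, a, h₁₃, by rwa [inter_comm], h₁₂, hbc.symm, hab.symm, hac.symm, ?_⟩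
  rwa [inter_right_comm]

lemma second_ne (h : IsLooseTriangle e₁ e₂ e₃) (h₁ : 1 < e₁.card) : e₂ ≠ e₁ := by
  rintro rfl
  obtain ⟨a, -, -, h₁₂, -⟩ := h
  rw [inter_self] at h₁₂
  simp [h₁₂] at h₁

lemma third_ne (h : IsLooseTriangle e₁ e₂ e₃) (h₁ : 1 < e₁.card) : e₃ ≠ e₁ :=
  h.swap.second_ne h₁

end IsLooseTriangle

lemma IsSat3.exists_looseTriangle {t : Finset V} (hsat : IsSat3 E) (ht : t.card = 3)
    (htE : t ∉ E) : ∃ f ∈ E, ∃ g ∈ E, IsLooseTriangle t f g := by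
  have of_insert : ∀ {f g}, f ∈ insert t E → g ∈ insert t E → IsLooseTriangle t f g →
      ∃ f ∈ E, ∃ g ∈ E, IsLooseTriangle t f g := fun hf hg h =>
    ⟨_, (mem_insert.1 hf).resolve_left (h.second_ne (by omega)),
      _, (mem_insert.1 hg).resolve_left (h.third_ne (by omega)), h⟩
  obtain ⟨e₁, h₁, e₂, h₂, e₃, h₃, htri : IsLooseTriangle e₁ e₂ e₃⟩ := hsat.2.2 t ht htE
  rcases mem_insert.1 h₁ with rfl | h₁'
  · exact of_insert h₂ h₃ htri
  rcases mem_insert.1 h₂ with rfl | h₂'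
  · exact of_insert h₃ h₁ htri.rotate
  rcases mem_insert.1 h₃ with rfl | h₃'
  · exact of_insert h₁ h₂ htri.rotate.rotate
  exact absurd ⟨e₁, h₁', e₂, h₂', e₃, h₃', htri⟩ hsat.2.1

lemma codeg_add_card_filter_notMem (E : Finset (Finset V)) (u w : V) :
    codeg E u w + #(E.filter fun e => u ∈ e ∧ w ∉ e) = deg E u := by
  rw [deg, codeg, ← card_filter_add_card_filter_not (s := E.filter (u ∈ ·)) (w ∈ ·),
    filter_filter, filter_filter]

lemma deg_pos_of_adj (h : Adj E v u) : 0 < deg E u := by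
  obtain ⟨-, e, he, -, hu⟩ := h
  exact card_pos.2 ⟨e, mem_filter.2 ⟨he, hu⟩⟩

namespace JFarNeighbor

lemma not_adj {e : Finset V} (hu : JFarNeighbor E j v u) (he : e ∈ E) (hue : u ∈ e)
    (hve : v ∉ e) (hwe : w ∈ e) (hwu : w ≠ u) : ¬ Adj E v w :=
  (hu.2.2.1 e he hue).resolve_left hve w hwe hwu

open Classical in
lemma card_filter_le_one {e : Finset V} (he : e ∈ E) (hve : v ∉ e) :
    #(e.filter (JFarNeighbor E j v)) ≤ 1 := by
  refine card_le_one.2 fun x hx y hy => by_contra fun hxy => ?_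
  rw [mem_filter] at hx hy
  exact hx.2.not_adj he hx.1 hve hy.1 (Ne.symm hxy) hy.2.2.1

end JFarNeighbor

/-- Otherwise the vertex of `f ∩ g` would be a neighbor of `v` on an edge `g` through a far
neighbor that avoids `v`. -/
lemma IsLooseTriangle.notMem_second {t f g : Finset V} (h : IsLooseTriangle t f g)
    (hf : f ∈ E) (hg : g ∈ E) (hvt : v ∈ t) (hfar : ∀ w ∈ t, w ≠ v → JFarNeighbor E j v w) :
    v ∉ f := by
  intro hvf
  obtain ⟨a, b, c, htf, hfg, htg, -, hbc, hac, -⟩ := h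
  have hva : v = a := eq_of_mem_of_inter_eq_singleton htf hvt hvf
  obtain ⟨hct, hcg⟩ := mem_of_inter_eq_singleton htg
  have hvg : v ∉ g := fun hvg => hac (hva ▸ eq_of_mem_of_inter_eq_singleton htg hvt hvg)
  obtain ⟨hbf, hbg⟩ := mem_of_inter_eq_singleton hfg
  have hvb : Adj E v b := ⟨by rintro rfl; exact hvg hbg, f, hf, hvf, hbf⟩
  exact (hfar c hct (by rintro rfl; exact hvg hcg)).not_adj hg hcg hvg hbg hbc hvb

lemma IsLooseTriangle.exists_path {f g : Finset V} {u₀ : V}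
    (h : IsLooseTriangle {v, u₀, u} f g) (hvf : v ∉ f) (hvg : v ∉ g) (hu₀f : u₀ ∈ f)
    (hne : u ≠ u₀) : ∃ m, m ∈ f ∧ m ≠ u₀ ∧ m ∈ g ∧ u ∈ g ∧ u₀ ∉ g := by
  obtain ⟨a, b, c, htf, hfg, htg, hab, -, hac, -⟩ := h
  have hu₀a : u₀ = a := eq_of_mem_of_inter_eq_singleton htf (by simp) hu₀f
  obtain ⟨hct, hcg⟩ := mem_of_inter_eq_singleton htg
  have hcu : c = u := by
    simp only [mem_insert, mem_singleton] at hct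
    rcases hct with rfl | rfl | rfl
    · exact absurd hcg hvg
    · exact absurd hu₀a hac.symm
    · rfl
  obtain ⟨hbf, hbg⟩ := mem_of_inter_eq_singleton hfg
  refine ⟨b, hbf, hu₀a ▸ hab.symm, hbg, hcu ▸ hcg, fun hu₀g => hne ?_⟩
  rw [← hcu, eq_of_mem_of_inter_eq_singleton htg (by simp) hu₀g]

lemma IsSat3.exists_path_of_jFarNeighbor {u₀ : V} (hsat : IsSat3 E)
    (hu₀ : JFarNeighbor E j v u₀) (hu : JFarNeighbor E j v u) (hne : u ≠ u₀)
    (htE : {v, u₀, u} ∉ E) :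
    ∃ f ∈ E, ∃ g ∈ E, ∃ m, u₀ ∈ f ∧ v ∉ f ∧ m ∈ f ∧ m ≠ u₀ ∧ m ∈ g ∧ u ∈ g ∧ u₀ ∉ g := by
  have hcard : ({v, u₀, u} : Finset V).card = 3 :=
    card_eq_three.2 ⟨v, u₀, u, hu₀.2.1.1, hu.2.1.1, hne.symm, rfl⟩
  obtain ⟨f, hf, g, hg, htri⟩ := hsat.exists_looseTriangle hcard htE
  have hfar : ∀ w ∈ ({v, u₀, u} : Finset V), w ≠ v → JFarNeighbor E j v w := by
    intro w hw hwv
    simp only [mem_insert, mem_singleton] at hw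
    rcases hw with rfl | rfl | rfl
    exacts [absurd rfl hwv, hu₀, hu]
  have hvf := htri.notMem_second hf hg (by simp) hfar
  have hvg := htri.swap.notMem_second hg hf (by simp) hfar
  by_cases hu₀f : u₀ ∈ f
  · obtain ⟨m, hm⟩ := htri.exists_path hvf hvg hu₀f hne
    exact ⟨f, hf, g, hg, m, hu₀f, hvf, hm⟩
  · have hu₀g : u₀ ∈ g := by
      obtain ⟨a, -, c, htf, -, htg, -, -, hac, -⟩ := htri
      obtain ⟨hat, haf⟩ := mem_of_inter_eq_singleton htf
      obtain ⟨hct, hcg⟩ := mem_of_inter_eq_singleton htg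
      simp only [mem_insert, mem_singleton] at hat hct
      rcases hat with rfl | rfl | rfl <;> rcases hct with rfl | rfl | rfl <;> tauto
    obtain ⟨m, hm⟩ := htri.swap.exists_path hvg hvf hu₀g hne
    exact ⟨g, hg, f, hf, m, hu₀g, hvg, hm⟩

variable (E j)

def edgeThirds (u₀ v : V) : Finset V :=
  (E.filter fun e => u₀ ∈ e ∧ v ∈ e).biUnion (· \ {u₀, v})

def awayNeighbors (v u₀ : V) : Finset V :=
  (E.filter fun f => u₀ ∈ f ∧ v ∉ f).biUnion (·.erase u₀)

open Classical in
noncomputable def farNeighborsVia (v u₀ m : V) : Finset V :=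
  (E.filter fun g => m ∈ g ∧ u₀ ∉ g).biUnion (·.filter (JFarNeighbor E j v))

noncomputable def farNeighborCover (v u₀ : V) : Finset V :=
  insert u₀ (edgeThirds E u₀ v ∪ (awayNeighbors E v u₀).biUnion (farNeighborsVia E j v u₀))

variable {E j}

lemma setOf_jFarNeighbor_subset_farNeighborCover {u₀ : V} (hsat : IsSat3 E)
    (hu₀ : JFarNeighbor E j v u₀) :
    {u | JFarNeighbor E j v u} ⊆ farNeighborCover E j v u₀ := by
  classical
  intro u hu
  rw [Set.mem_ofPred_eq] at hu
  rw [mem_coe, farNeighborCover, mem_insert, mem_union]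
  by_cases hne : u = u₀
  · exact Or.inl hne
  by_cases htE : {v, u₀, u} ∈ E
  · refine Or.inr (Or.inl (mem_biUnion.2 ⟨_, mem_filter.2 ⟨htE, by simp, by simp⟩, ?_⟩))
    simp [hne, hu.2.1.1.symm]
  obtain ⟨f, hf, g, hg, m, hu₀f, hvf, hmf, hmu₀, hmg, hug, hu₀g⟩ :=
    hsat.exists_path_of_jFarNeighbor hu₀ hu hne htE
  refine Or.inr (Or.inr (mem_biUnion.2 ⟨m, ?_, ?_⟩))
  · exact mem_biUnion.2 ⟨f, mem_filter.2 ⟨hf, hu₀f, hvf⟩, mem_erase.2 ⟨hmu₀, hmf⟩⟩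
  · exact mem_biUnion.2 ⟨g, mem_filter.2 ⟨hg, hmg, hu₀g⟩, mem_filter.2 ⟨hug, hu⟩⟩

lemma card_edgeThirds_le {u₀ : V} (huni : IsUniform3 E) (hne : u₀ ≠ v) :
    #(edgeThirds E u₀ v) ≤ codeg E u₀ v := by
  refine (card_biUnion_le_card_mul _ _ 1 fun e he => ?_).trans (mul_one _).le
  rw [mem_filter] at he
  rw [card_sdiff_of_subset (by simp [insert_subset_iff, he.2.1, he.2.2]), huni e he.1,
    card_pair hne]

lemma card_awayNeighbors_le {u₀ : V} (huni : IsUniform3 E) :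
    #(awayNeighbors E v u₀) ≤ 2 * #(E.filter fun f => u₀ ∈ f ∧ v ∉ f) := by
  refine (card_biUnion_le_card_mul _ _ 2 fun f hf => ?_).trans (mul_comm _ _).le
  rw [mem_filter] at hf
  rw [card_erase_of_mem hf.2.1, huni f hf.1]

/-- `m` has degree at most `j` by condition (2) and one of its edges contains `u₀`; the others
avoid `v` since `m ∉ N(v)`, so each carries at most one far neighbor. -/
lemma card_farNeighborsVia_le {u₀ : V} (hu₀ : JFarNeighbor E j v u₀)
    (hm : m ∈ awayNeighbors E v u₀) : #(farNeighborsVia E j v u₀ m) ≤ j - 1 := by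
  obtain ⟨f, hf, hmf⟩ := mem_biUnion.1 hm
  rw [mem_filter] at hf
  obtain ⟨hf, hu₀f, hvf⟩ := hf
  obtain ⟨hmu₀, hmf⟩ := mem_erase.1 hmf
  have hdeg : deg E m ≤ j := hu₀.2.2.2 f hf hu₀f hvf m hmf
  have hcodeg : 0 < codeg E m u₀ := card_pos.2 ⟨f, mem_filter.2 ⟨hf, hmf, hu₀f⟩⟩
  have hvm : ¬ Adj E v m := hu₀.not_adj hf hu₀f hvf hmf hmu₀
  have hv : ∀ g ∈ E.filter fun g => m ∈ g ∧ u₀ ∉ g, v ∉ g := by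
    intro g hg hvg
    exact hvm ⟨by rintro rfl; exact hvf hmf, g, (mem_filter.1 hg).1, hvg, (mem_filter.1 hg).2.1⟩
  have := codeg_add_card_filter_notMem E m u₀
  calc #(farNeighborsVia E j v u₀ m)
      ≤ #(E.filter fun g => m ∈ g ∧ u₀ ∉ g) * 1 := card_biUnion_le_card_mul _ _ _ fun g hg =>
        JFarNeighbor.card_filter_le_one (mem_filter.1 hg).1 (hv g hg)
    _ ≤ j - 1 := by omega

lemma card_farNeighborCover_le {u₀ : V} (huni : IsUniform3 E) (hu₀ : JFarNeighbor E j v u₀) :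
    #(farNeighborCover E j v u₀) ≤ 1 + j + 2 * j * (j - 1) := by
  have hdeg := codeg_add_card_filter_notMem E u₀ v
  have hu₀deg := hu₀.1
  have hthirds := card_edgeThirds_le huni hu₀.2.1.1.symm
  have haway := card_awayNeighbors_le (v := v) (u₀ := u₀) huni
  have hvia : #((awayNeighbors E v u₀).biUnion (farNeighborsVia E j v u₀)) ≤ 2 * j * (j - 1) :=
    (card_biUnion_le_card_mul _ _ _ fun m hm => card_farNeighborsVia_le hu₀ hm).trans
      (Nat.mul_le_mul_right _ (by omega))
  calc #(farNeighborCover E j v u₀)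
      ≤ #(edgeThirds E u₀ v ∪ (awayNeighbors E v u₀).biUnion (farNeighborsVia E j v u₀)) + 1 :=
        card_insert_le _ _
    _ ≤ #(edgeThirds E u₀ v) + 2 * j * (j - 1) + 1 := by grw [card_union_le, hvia]
    _ ≤ 1 + j + 2 * j * (j - 1) := by omega

end Hypergraph

theorem few_jfar_neighbors_general {V : Type*} [DecidableEq V]
    (E : Finset (Finset V)) (hsat : IsSat3 E) (j : ℕ) (v : V) :
    ({u : V | JFarNeighbor E j v u}).ncard ≤ 2 * j ^ 2 := by
  rcases Set.eq_empty_or_nonempty {u | JFarNeighbor E j v u} with hempty | ⟨u₀, hu₀⟩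
  · simp [hempty]
  have hj : 1 ≤ j := (deg_pos_of_adj hu₀.2.1).trans_le hu₀.1
  calc ({u : V | JFarNeighbor E j v u}).ncard
      ≤ #(farNeighborCover E j v u₀) :=
        (Set.ncard_le_ncard (setOf_jFarNeighbor_subset_farNeighborCover hsat hu₀)).trans
          (Set.ncard_coe_finset _).le
    _ ≤ 1 + j + 2 * j * (j - 1) := card_farNeighborCover_le hsat.1 hu₀
    _ ≤ 2 * j ^ 2 := by
      obtain ⟨k, rfl⟩ : ∃ k, j = k + 1 := ⟨j - 1, by omega⟩
      simp only [Nat.add_sub_cancel]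
      nlinarith

theorem few_jfar_neighbors {V : Type*} [Fintype V] [DecidableEq V]
    (E : Finset (Finset V)) (hsat : IsSat3 E) (j : ℕ) (hj : 2 ≤ j) (v : V) :
    ({u : V | JFarNeighbor E j v u}).ncard ≤ 2 * j ^ 2 :=
  few_jfar_neighbors_general E hsat j v
end
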